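/- Let n ≥ 1, let R be a commutative ring, let x_1, …, x_n ∈ R and let a = (a_1, a_2, …) be any sequence in R. Then the n×n determinant det_{1≤i,j≤n} ( (x_i|a)^{n−j} ) equals the Vandermonde product ∏_{1≤i<j≤n} (x_i − x_j); in particular it is independent of the sequence a. -/

import Mathlib

open Finset

noncomputable def geom {R : Type*} [CommRing R] (x : R) : PowerSeries R :=
  PowerSeries.mk fun k => x ^ k

noncomputable def lin {R : Type*} [CommRing R] (a : R) : PowerSeries R :=
  1 + PowerSeries.C a * PowerSeries.X

noncomputable def facpow {R : Type*} [CommRing R] (x : R) (a : ℕ → R) (m : ℕ) : R :=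
  ∏ j ∈ Finset.range m, (x + a (j + 1))

noncomputable def hgl {R : Type*} [CommRing R] {n : ℕ} (x : Fin n → R) (a : ℕ → R) (m : ℤ) : R :=
  if 0 ≤ m then
    PowerSeries.coeff m.toNat
      ((∏ i, geom (x i)) * ∏ j ∈ Finset.range (n + m.toNat - 1), lin (a (j + 1)))
  else 0

noncomputable def hsp {R : Type*} [CommRing R] {n : ℕ} (x : Fin n → Rˣ) (a : ℕ → R) (m : ℤ) : R :=
  if 0 ≤ m then
    PowerSeries.coeff m.toNat
      ((∏ i, geom ((x i : R)) * geom (((x i)⁻¹ : Rˣ) : R)) *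
        ∏ j ∈ Finset.range (n + m.toNat - 1), lin (a (j + 1)))
  else 0

noncomputable def hoo {R : Type*} [CommRing R] {n : ℕ} (x : Fin n → Rˣ) (a : ℕ → R) (m : ℤ) : R :=
  if 0 ≤ m then
    PowerSeries.coeff m.toNat
      ((1 + PowerSeries.X) * (∏ i, geom ((x i : R)) * geom (((x i)⁻¹ : Rˣ) : R)) *
        ∏ j ∈ Finset.range (n + m.toNat - 1), lin (a (j + 1)))
  else 0

noncomputable def heo {R : Type*} [CommRing R] {n : ℕ} (x : Fin n → Rˣ) (a : ℕ → R) (m : ℤ) : R :=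
  if 0 ≤ m then
    if h : n = 1 then
      (PowerSeries.coeff m.toNat
        ((geom ((x ⟨0, by omega⟩ : Rˣ) : R) + geom (((x ⟨0, by omega⟩)⁻¹ : Rˣ) : R)) *
          ∏ j ∈ Finset.range m.toNat, lin (a (j + 1))))
        - (if m = 0 then 1 else 0)
    else
      PowerSeries.coeff m.toNat
        ((1 - PowerSeries.X ^ 2) * (∏ i, geom ((x i : R)) * geom (((x i)⁻¹ : Rˣ) : R)) *
          ∏ j ∈ Finset.range (n + m.toNat - 1), lin (a (j + 1)))
  else 0

noncomputable def heod {R : Type*} [CommRing R] {n : ℕ} (x : Fin n → Rˣ) (a : ℕ → R) (m : ℤ) : R :=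
  if 0 < m then
    if h : 0 < n then
      PowerSeries.coeff m.toNat
        ((geom ((x ⟨0, h⟩ : Rˣ) : R) - geom (((x ⟨0, h⟩)⁻¹ : Rˣ) : R)) *
          (∏ i ∈ Finset.univ.filter (fun i : Fin n => i ≠ ⟨0, h⟩),
            geom ((x i : R)) * geom (((x i)⁻¹ : Rˣ) : R)) *
          ∏ j ∈ Finset.range (n + m.toNat - 1), lin (a (j + 1)))
    else 0
  else 0

/-! `(x|a)^k` is a monic polynomial of degree `k` in `x`, so column operations turn the matrix into
`(x_i^(n-j))`, the Vandermonde matrix with its columns reversed, whose determinant is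
`∏_{i<j} (x_i - x_j)`. -/

open Polynomial

namespace Matrix

variable {R : Type*} [CommRing R] {n : ℕ}

theorem det_pow_rev (v : Fin n → R) :
    (of fun i j : Fin n => v i ^ (j.rev : ℕ)).det = ∏ i : Fin n, ∏ j ∈ Ioi i, (v i - v j) := by
  have h := det_projVandermonde 1 v
  simp only [Pi.one_apply, one_mul] at h
  rw [← h]
  congr 1
  ext i j
  simp [projVandermonde_apply]

theorem det_eval_rev_eq_det_pow_rev (v : Fin n → R) (p : Fin n → R[X])
    (h_deg : ∀ i, (p i).natDegree = i) (h_monic : ∀ i, (p i).Monic) :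
    (of fun i j : Fin n => (p j.rev).eval (v i)).det = (of fun i j : Fin n => v i ^ (j.rev : ℕ)).det := by
  calc _ = ((of fun i j => (p j).eval (v i)).submatrix id Fin.revPerm).det := rfl
    _ = Equiv.Perm.sign Fin.revPerm * (vandermonde v).det := by
      rw [det_permute', det_eval_matrixOfPolynomials_eq_det_vandermonde v p h_deg h_monic]
    _ = ((vandermonde v).submatrix id Fin.revPerm).det := (det_permute' _ _).symm

end Matrix

section FactorialPowers

variable {R : Type*} [CommRing R]

noncomputable def facpowPoly (a : ℕ → R) (m : ℕ) : R[X] :=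
  ∏ j ∈ range m, (X + C (a (j + 1)))

theorem facpowPoly_monic (a : ℕ → R) (m : ℕ) : (facpowPoly a m).Monic :=
  monic_prod_of_monic _ _ fun _ _ => monic_X_add_C _

theorem natDegree_facpowPoly [Nontrivial R] (a : ℕ → R) (m : ℕ) : (facpowPoly a m).natDegree = m := by
  simp [facpowPoly, natDegree_prod_of_monic _ _ fun _ _ => monic_X_add_C _]

theorem eval_facpowPoly (x : R) (a : ℕ → R) (m : ℕ) : (facpowPoly a m).eval x = facpow x a m := by
  simp [facpowPoly, facpow, eval_prod]

end FactorialPowers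

theorem factorial_vandermonde {R : Type*} [CommRing R] (n : ℕ)
    (x : Fin n → R) (a : ℕ → R) :
    Matrix.det (Matrix.of fun i j : Fin n => facpow (x i) a (n - 1 - (j : ℕ))) =
      ∏ i : Fin n, ∏ j ∈ Finset.Ioi i, (x i - x j) := by
  rcases subsingleton_or_nontrivial R with _ | _
  · exact Subsingleton.elim _ _
  have hcol : ∀ j : Fin n, n - 1 - (j : ℕ) = j.rev := fun j => by rw [Fin.val_rev]; omega
  simp_rw [hcol, ← eval_facpowPoly]
  rw [Matrix.det_eval_rev_eq_det_pow_rev x (fun j => facpowPoly a j)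
    (fun j => natDegree_facpowPoly a j) (fun j => facpowPoly_monic a j), Matrix.det_pow_rev]
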